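/- arXiv:1707.00840 — 4 statements merged into one kernel-verified Lean document; each statement's English description precedes it below -/
import Mathlib

section
/- For all real numbers $\nu \ge 0$ and $\lambda \ge 1$, one has $\frac{2}{\sqrt{2\lambda-1+\nu(\nu+2\lambda)}}\,\frac{\Gamma(\nu/2+1)}{\Gamma(\nu/2+\lambda)} \le \frac{\Gamma((\nu+1)/2)}{\Gamma((\nu+1)/2+\lambda)}$. -/
/-!
Put `R(t) = Γ(t + 1/2)² / (Γ(t)² (t - 1/2))`. After the substitution `s = (ν + 1)/2`,
`y = ν/2 + λ`, the inequality is `R(y) ≤ R(s + 1/2)`, so it suffices that `R` is antitone on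
`(1/2, ∞)`. The functional equation of `Γ` gives `R(t + 1) = R(t) (1 - 1/(4t²))`, with a factor
increasing in `t`; hence `n ↦ R(y + n) / R(x + n)` increases for `x ≤ y`. Log-convexity of `Γ`
squeezes `1 ≤ R(t) ≤ t / (t - 1/2)`, so `R(t) → 1` and that increasing sequence tends to `1`,
whence `R(y) ≤ R(x)`.
-/

open Real Filter Topology

lemma Gamma_add_half_sq_le_Gamma_mul_Gamma_add_one {z : ℝ} (hz : 0 < z) :
    Gamma (z + 1 / 2) ^ 2 ≤ Gamma z * Gamma (z + 1) := by
  have hconv := Gamma_mul_add_mul_le_rpow_Gamma_mul_rpow_Gamma hz (by linarith : 0 < z + 1)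
    (by norm_num : (0 : ℝ) < 1 / 2) (by norm_num : (0 : ℝ) < 1 / 2) (by norm_num)
  rw [show 1 / 2 * z + 1 / 2 * (z + 1) = z + 1 / 2 by ring, ← sqrt_eq_rpow, ← sqrt_eq_rpow,
    ← sqrt_mul (Gamma_pos_of_pos hz).le] at hconv
  exact (le_sqrt (Gamma_pos_of_pos (by linarith)).le
    (mul_pos (Gamma_pos_of_pos hz) (Gamma_pos_of_pos (by linarith))).le).mp hconv

noncomputable def gammaHalfRatio (t : ℝ) : ℝ :=
  Gamma (t + 1 / 2) ^ 2 / (Gamma t ^ 2 * (t - 1 / 2))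

section gammaHalfRatio

variable {t : ℝ}

lemma one_le_gammaHalfRatio (ht : 1 / 2 < t) : 1 ≤ gammaHalfRatio t := by
  have hle := Gamma_add_half_sq_le_Gamma_mul_Gamma_add_one (by linarith : 0 < t - 1 / 2)
  rw [show t - 1 / 2 + 1 / 2 = t by ring, show t - 1 / 2 + 1 = t + 1 / 2 by ring] at hle
  have hrec := Gamma_add_one (by linarith : t - 1 / 2 ≠ 0)
  rw [show t - 1 / 2 + 1 = t + 1 / 2 by ring] at hrec
  rw [gammaHalfRatio, one_le_div (by have := Gamma_pos_of_pos (by linarith : 0 < t); positivity)]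
  nlinarith [Gamma_pos_of_pos (by linarith : 0 < t + 1 / 2)]

lemma gammaHalfRatio_pos (ht : 1 / 2 < t) : 0 < gammaHalfRatio t :=
  zero_lt_one.trans_le (one_le_gammaHalfRatio ht)

lemma gammaHalfRatio_le (ht : 1 / 2 < t) : gammaHalfRatio t ≤ t / (t - 1 / 2) := by
  have hle := Gamma_add_half_sq_le_Gamma_mul_Gamma_add_one (by linarith : 0 < t)
  rw [Gamma_add_one (by linarith : t ≠ 0)] at hle
  have hΓ := Gamma_pos_of_pos (by linarith : 0 < t)
  rw [gammaHalfRatio, div_le_div_iff₀ (by positivity) (by linarith)]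
  nlinarith

lemma gammaHalfRatio_add_one (ht : 1 / 2 < t) :
    gammaHalfRatio (t + 1) = gammaHalfRatio t * (1 - 1 / (4 * t ^ 2)) := by
  have hΓ := Gamma_pos_of_pos (by linarith : 0 < t)
  have hΓ' := Gamma_pos_of_pos (by linarith : 0 < t + 1 / 2)
  have h₁ : t - 1 / 2 ≠ 0 := by linarith
  have h₂ : t + 1 - 1 / 2 ≠ 0 := by linarith
  have h₃ : t ≠ 0 := by linarith
  rw [gammaHalfRatio, gammaHalfRatio, show t + 1 + 1 / 2 = t + 1 / 2 + 1 by ring,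
    Gamma_add_one (by linarith : t + 1 / 2 ≠ 0), Gamma_add_one h₃, div_mul_eq_mul_div,
    div_eq_div_iff (by positivity) (by positivity), one_sub_div (by positivity)]
  field_simp
  ring

lemma tendsto_gammaHalfRatio_atTop : Tendsto gammaHalfRatio atTop (𝓝 1) := by
  have hupper : Tendsto (fun t : ℝ => t / (t - 1 / 2)) atTop (𝓝 1) := by
    have hden : Tendsto (fun t : ℝ => t - 1 / 2) atTop atTop := by
      simpa only [sub_eq_add_neg, id] using tendsto_atTop_add_const_right atTop (-(1 / 2)) tendsto_id
    have h : Tendsto (fun t : ℝ => 1 + 1 / 2 / (t - 1 / 2)) atTop (𝓝 (1 + 0)) :=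
      tendsto_const_nhds.add (tendsto_const_nhds.div_atTop hden)
    rw [add_zero] at h
    refine h.congr' ?_
    filter_upwards [eventually_gt_atTop (1 / 2)] with t ht
    have hne : t - 1 / 2 ≠ 0 := by linarith
    rw [eq_div_iff hne, add_mul, div_mul_cancel₀ _ hne]
    ring
  refine tendsto_of_tendsto_of_tendsto_of_le_of_le' tendsto_const_nhds hupper ?_ ?_
  · filter_upwards [eventually_gt_atTop (1 / 2)] with t ht using one_le_gammaHalfRatio ht
  · filter_upwards [eventually_gt_atTop (1 / 2)] with t ht using gammaHalfRatio_le ht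

end gammaHalfRatio

lemma gammaHalfRatio_div_le_gammaHalfRatio_add_one_div {x y : ℝ} (hx : 1 / 2 < x) (hxy : x ≤ y) :
    gammaHalfRatio y / gammaHalfRatio x ≤ gammaHalfRatio (y + 1) / gammaHalfRatio (x + 1) := by
  have hy : 1 / 2 < y := hx.trans_le hxy
  have hq : 0 < 1 - 1 / (4 * x ^ 2) := by
    rw [sub_pos, div_lt_one (by positivity)]
    nlinarith
  have hq_le : 1 - 1 / (4 * x ^ 2) ≤ 1 - 1 / (4 * y ^ 2) := by
    gcongr
  rw [gammaHalfRatio_add_one hx, gammaHalfRatio_add_one hy, mul_div_mul_comm]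
  exact le_mul_of_one_le_right
    (div_nonneg (gammaHalfRatio_pos hy).le (gammaHalfRatio_pos hx).le) ((one_le_div hq).mpr hq_le)

lemma gammaHalfRatio_antitoneOn : AntitoneOn gammaHalfRatio (Set.Ioi (1 / 2)) := by
  intro x hx y _ hxy
  rw [Set.mem_Ioi] at hx
  have hshift : ∀ a : ℝ, Tendsto (fun n : ℕ => gammaHalfRatio (a + n)) atTop (𝓝 1) := fun a =>
    tendsto_gammaHalfRatio_atTop.comp
      (tendsto_atTop_add_const_left _ a tendsto_natCast_atTop_atTop)
  have hlim := (hshift y).div (hshift x) one_ne_zero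
  rw [div_one] at hlim
  have hmono : Monotone fun n : ℕ => gammaHalfRatio (y + n) / gammaHalfRatio (x + n) := by
    refine monotone_nat_of_le_succ fun n => ?_
    simp only [Nat.cast_succ, ← add_assoc]
    exact gammaHalfRatio_div_le_gammaHalfRatio_add_one_div
      (by linarith [n.cast_nonneg (α := ℝ)]) (by linarith)
  simpa [div_le_one (gammaHalfRatio_pos hx)] using hmono.ge_of_tendsto hlim 0

lemma Gamma_add_half_mul_Gamma_add_half_le {s y : ℝ} (hs : 0 < s) (hsy : s + 1 / 2 ≤ y) :
    Gamma (s + 1 / 2) * Gamma (y + 1 / 2) ≤ √(s * (y - 1 / 2)) * (Gamma s * Gamma y) := by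
  have hΓs := Gamma_pos_of_pos hs
  have hΓs' := Gamma_pos_of_pos (by linarith : 0 < s + 1 / 2)
  have hΓy := Gamma_pos_of_pos (by linarith : 0 < y)
  have hΓy' := Gamma_pos_of_pos (by linarith : 0 < y + 1 / 2)
  have hy : 0 < y - 1 / 2 := by linarith
  have hanti := gammaHalfRatio_antitoneOn (Set.mem_Ioi.mpr (by linarith))
    (Set.mem_Ioi.mpr (by linarith)) hsy
  rw [gammaHalfRatio, gammaHalfRatio, show s + 1 / 2 + 1 / 2 = s + 1 by ring,
    show s + 1 / 2 - 1 / 2 = s by ring, Gamma_add_one hs.ne',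
    div_le_div_iff₀ (by positivity) (by positivity)] at hanti
  rw [← pow_le_pow_iff_left₀ (by positivity) (by positivity) two_ne_zero,
    mul_pow (√_), sq_sqrt (by positivity)]
  nlinarith

theorem stmt_0 (ν l : ℝ) (hν : 0 ≤ ν) (hl : 1 ≤ l) :
    2 / Real.sqrt (2 * l - 1 + ν * (ν + 2 * l)) *
      (Real.Gamma (ν / 2 + 1) / Real.Gamma (ν / 2 + l)) ≤
    Real.Gamma ((ν + 1) / 2) / Real.Gamma ((ν + 1) / 2 + l) := by
  set s := (ν + 1) / 2
  set y := ν / 2 + l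
  have hs : 0 < s := by simp only [s]; positivity
  have hsy : s + 1 / 2 ≤ y := by simp only [s, y]; linarith
  have hsqrt : √(2 * l - 1 + ν * (ν + 2 * l)) = 2 * √(s * (y - 1 / 2)) := by
    rw [show 2 * l - 1 + ν * (ν + 2 * l) = 2 ^ 2 * (s * (y - 1 / 2)) by ring,
      sqrt_mul (by positivity), sqrt_sq zero_le_two]
  have hP : 0 < √(s * (y - 1 / 2)) := sqrt_pos.mpr (mul_pos hs (by linarith))
  rw [hsqrt, show ν / 2 + 1 = s + 1 / 2 by ring, show s + l = y + 1 / 2 by ring,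
    div_mul_div_comm, div_le_div_iff₀ (by positivity) (Gamma_pos_of_pos (by linarith))]
  linarith [Gamma_add_half_mul_Gamma_add_half_le hs hsy]
end

section
/- Let $m \ge 1$ be an integer and let $n \ge m$ be an integer with $n - m$ even and $n > m$. Then $\frac{1}{\sqrt{n^2-m^2}}\,\prod_{j=0}^{m-1} \frac{1}{n-m+2j+1} \le \prod_{j=0}^{m} \frac{1}{n-m+2j}$. -/
/-!
Put `a = n - m`, so that `n² - m² = a (a + 2m)`. Squaring the product of the even-step progression
`a, a + 2, …, a + 2m` and pairing each factor with its successor gives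
`a (a + 2m) ∏_{j<m} (a + 2j)(a + 2j + 2)`, and each pair is at most `(a + 2j + 1)²` by AM-GM.
Taking square roots and reciprocals yields the inequality.
-/

open Finset

theorem sq_prod_range_succ {M : Type*} [CommMonoid M] (f : ℕ → M) (m : ℕ) :
    (∏ j ∈ range (m + 1), f j) ^ 2 = f 0 * f m * ∏ j ∈ range m, f j * f (j + 1) := by
  rw [sq, prod_mul_distrib]
  nth_rw 1 [prod_range_succ]
  rw [prod_range_succ']
  ac_rfl

theorem prod_range_add_two_mul_le (a : ℝ) (ha : 0 < a) (m : ℕ) :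
    ∏ j ∈ range (m + 1), (a + 2 * j) ≤
      √(a * (a + 2 * m)) * ∏ j ∈ range m, (a + 2 * j + 1) := by
  have hP : 0 < ∏ j ∈ range (m + 1), (a + 2 * (j : ℝ)) := prod_pos fun j _ => by positivity
  have hQ : 0 ≤ ∏ j ∈ range m, (a + 2 * (j : ℝ) + 1) := prod_nonneg fun j _ => by positivity
  rw [← Real.sqrt_sq hQ, ← Real.sqrt_mul (by positivity), Real.le_sqrt' hP]
  calc (∏ j ∈ range (m + 1), (a + 2 * (j : ℝ))) ^ 2
      = a * (a + 2 * m) * ∏ j ∈ range m, (a + 2 * j) * (a + 2 * j + 2) := by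
        rw [sq_prod_range_succ]
        push_cast
        simp only [mul_zero, add_zero, mul_add, mul_one, add_assoc]
    _ ≤ a * (a + 2 * m) * ∏ j ∈ range m, (a + 2 * j + 1) ^ 2 := by
        gcongr with j
        nlinarith
    _ = a * (a + 2 * m) * (∏ j ∈ range m, (a + 2 * j + 1)) ^ 2 := by rw [prod_pow]

theorem stmt_2_general (m n : ℕ) (hmn : m < n) :
    (1 / Real.sqrt ((n : ℝ) ^ 2 - (m : ℝ) ^ 2)) *
      ∏ j ∈ Finset.range m, (1 / ((n : ℝ) - m + 2 * j + 1)) ≤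
    ∏ j ∈ Finset.range (m + 1), (1 / ((n : ℝ) - m + 2 * j)) := by
  have ha : (0 : ℝ) < n - m := sub_pos.mpr (by exact_mod_cast hmn)
  have hsq : (n : ℝ) ^ 2 - (m : ℝ) ^ 2 = (n - m) * (n - m + 2 * m) := by ring
  have hP : 0 < ∏ j ∈ range (m + 1), ((n : ℝ) - m + 2 * j) :=
    prod_pos fun j _ => by positivity
  simp only [one_div, prod_inv_distrib, ← mul_inv, hsq]
  exact inv_anti₀ hP (prod_range_add_two_mul_le _ ha m)

theorem stmt_2 (m n : ℕ) (hm : 1 ≤ m) (hmn : m < n) (heven : Even (n - m)) :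
    (1 / Real.sqrt ((n : ℝ) ^ 2 - (m : ℝ) ^ 2)) *
      ∏ j ∈ Finset.range m, (1 / ((n : ℝ) - m + 2 * j + 1)) ≤
    ∏ j ∈ Finset.range (m + 1), (1 / ((n : ℝ) - m + 2 * j)) :=
  stmt_2_general m n hmn
end

section
/- For real numbers $\sigma \ge 1$ and $n > \sigma$, one has $\left(\frac{\Gamma((n-\sigma+1)/2)}{\Gamma((n+\sigma+1)/2)}\right)^2 \le 2^{2\sigma}\,\frac{\Gamma(n-\sigma)}{\Gamma(n+\sigma)}$. -/
/-!
With `x = (n - σ) / 2` and `y = (n + σ) / 2`, Legendre duplication turns the right-hand side into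
`Γ(x) Γ(x + 1/2) / (Γ(y) Γ(y + 1/2))`, the power of two cancelling exactly. The left-hand side is
`(Γ(x + 1/2) / Γ(y + 1/2))²`, so it remains to see `Γ(x + 1/2) / Γ(y + 1/2) ≤ Γ(x) / Γ(y)`, i.e. that
`z ↦ Γ(z + 1/2) / Γ(z)` is monotone; this follows from the log-convexity of `Γ`, whose increments
`log Γ(z + a) - log Γ(z)` grow with `z`.
-/

open Real Set

section Increment

variable {𝕜 : Type*} [Field 𝕜] [LinearOrder 𝕜] [IsStrictOrderedRing 𝕜] {s : Set 𝕜} {f : 𝕜 → 𝕜}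

lemma ConvexOn.add_sub_le_add_sub (hf : ConvexOn 𝕜 s f) {x y a : 𝕜} (hx : x ∈ s)
    (hya : y + a ∈ s) (ha : 0 ≤ a) (hxy : x ≤ y) :
    f (x + a) - f x ≤ f (y + a) - f y := by
  rcases ha.eq_or_lt with rfl | ha
  · simp
  rcases hxy.eq_or_lt with rfl | hxy
  · rfl
  have hxa : x + a ∈ s := hf.1.ordConnected.out hx hya ⟨by linarith, by linarith⟩
  have hy : y ∈ s := hf.1.ordConnected.out hx hya ⟨hxy.le, by linarith⟩
  have hslope : slope f x (x + a) ≤ slope f y (y + a) :=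
    calc slope f x (x + a)
        ≤ slope f x (y + a) := hf.slope_mono hx ⟨hxa, by simpa using ha.ne'⟩
            ⟨hya, by simp; linarith⟩ (by linarith)
      _ = slope f (y + a) x := slope_comm _ _ _
      _ ≤ slope f (y + a) y := hf.slope_mono hya ⟨hx, by simp; linarith⟩
            ⟨hy, by simpa using ha.ne'⟩ hxy.le
      _ = slope f y (y + a) := slope_comm _ _ _
  simp only [slope_def_field, add_sub_cancel_left] at hslope
  exact (div_le_div_iff_of_pos_right ha).mp hslope

end Increment

namespace Real

lemma monotoneOn_Gamma_add_div_Gamma {a : ℝ} (ha : 0 ≤ a) :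
    MonotoneOn (fun z ↦ Gamma (z + a) / Gamma z) (Ioi 0) := by
  intro x (hx : 0 < x) y (hy : 0 < y) hxy
  have hΓ {z : ℝ} (hz : 0 < z) : 0 < Gamma (z + a) / Gamma z :=
    div_pos (Gamma_pos_of_pos (by linarith)) (Gamma_pos_of_pos hz)
  rw [← log_le_log_iff (hΓ hx) (hΓ hy), log_div, log_div]
  · exact convexOn_log_Gamma.add_sub_le_add_sub hx (show 0 < y + a by linarith) ha hxy
  all_goals exact (Gamma_pos_of_pos (by linarith)).ne'

lemma Gamma_two_mul (s : ℝ) :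
    Gamma (2 * s) = 2 ^ (2 * s - 1) / √π * (Gamma s * Gamma (s + 1 / 2)) := by
  rw [Gamma_mul_Gamma_add_half, rpow_sub two_pos, rpow_one, rpow_sub two_pos, rpow_one]
  have := sqrt_pos.2 pi_pos
  field_simp

end Real

theorem stmt_4 (σ n : ℝ) (hσ : 1 ≤ σ) (hn : σ < n) :
    (Real.Gamma ((n - σ + 1) / 2) / Real.Gamma ((n + σ + 1) / 2)) ^ 2 ≤
      2 ^ (2 * σ) * (Real.Gamma (n - σ) / Real.Gamma (n + σ)) := by
  set x := (n - σ) / 2 with hx_def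
  set y := (n + σ) / 2 with hy_def
  have hx : 0 < x := by linarith
  have hy : 0 < y := by linarith
  have hratio : 2 ^ (2 * σ) * (Gamma (n - σ) / Gamma (n + σ)) =
      Gamma x / Gamma y * (Gamma (x + 1 / 2) / Gamma (y + 1 / 2)) := by
    rw [show n - σ = 2 * x by linarith, show n + σ = 2 * y by linarith, Gamma_two_mul,
      Gamma_two_mul, show 2 * y - 1 = 2 * σ + (2 * x - 1) by linarith, rpow_add two_pos]
    have hΓy := Gamma_pos_of_pos hy
    have hΓy' := Gamma_pos_of_pos (show 0 < y + 1 / 2 by linarith)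
    field_simp
  have hmono : Gamma (x + 1 / 2) / Gamma (y + 1 / 2) ≤ Gamma x / Gamma y := by
    have hinc := monotoneOn_Gamma_add_div_Gamma (a := 1 / 2) (by norm_num) hx hy (by linarith)
    rw [div_le_div_iff₀ (Gamma_pos_of_pos hx) (Gamma_pos_of_pos hy)] at hinc
    rw [div_le_div_iff₀ (Gamma_pos_of_pos (by linarith)) (Gamma_pos_of_pos hy)]
    linarith
  rw [hratio, sq, show (n - σ + 1) / 2 = x + 1 / 2 by linarith,
    show (n + σ + 1) / 2 = y + 1 / 2 by linarith]
  exact mul_le_mul_of_nonneg_right hmono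
    (div_pos (Gamma_pos_of_pos (by linarith)) (Gamma_pos_of_pos (by linarith))).le
end

section
/- Let $a,b,c$ be real with $c > 0$, $c$ not a non-positive integer, and $c - a - b > 0$. Then the series ${}_2F_1(a,b;c;z) = \sum_{j=0}^\infty \frac{(a)_j(b)_j}{(c)_j\,j!} z^j$ converges at $z = 1$ and ${}_2F_1(a,b;c;1) = \frac{\Gamma(c)\Gamma(c-a-b)}{\Gamma(c-a)\Gamma(c-b)}$, where Gamma values at negative non-integer arguments are defined via the reflection formula. -/
/-- The rising factorial (Pochhammer symbol) `(a)_j`. -/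
noncomputable def poch (a : ℝ) (j : ℕ) : ℝ := ∏ i ∈ Finset.range j, (a + i)

/-!
Write `F(c) = ₂F₁(a, b; c; 1)`. By Euler's limit formula `Γ(s) = lim n^s n! / (s)_{n+1}`, the terms
of `F(c)` decay like `n^(a+b-c-1)`, so the series converges and Gauss's contiguous relation
`c (c-a-b) F(c) = (c-a) (c-b) F(c+1)` follows from a telescoping sum. Iterating it,
`F(c) = (c-a)_n (c-b)_n / ((c)_n (c-a-b)_n) · F(c+n)` for every `n`. As `n → ∞`, `F(c+n) → 1` by
dominated convergence, and Euler's formula again turns the prefactor into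
`Γ(c) Γ(c-a-b) / (Γ(c-a) Γ(c-b))`.
-/
open Filter Topology Asymptotics Real
open scoped Nat

section Pochhammer

variable {a b : ℝ} {j : ℕ}

@[simp]
lemma poch_zero (a : ℝ) : poch a 0 = 1 := rfl

lemma poch_succ (a : ℝ) (j : ℕ) : poch a (j + 1) = poch a j * (a + j) :=
  Finset.prod_range_succ _ _

lemma poch_succ' (a : ℝ) (j : ℕ) : poch a (j + 1) = a * poch (a + 1) j := by
  simp only [poch, Finset.prod_range_succ', Nat.cast_add, Nat.cast_one, Nat.cast_zero, add_zero,
    add_assoc, add_comm (1 : ℝ), mul_comm a]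

lemma poch_pos (ha : 0 < a) (j : ℕ) : 0 < poch a j :=
  Finset.prod_pos fun _ _ => by positivity

lemma poch_nonneg (ha : 0 ≤ a) (j : ℕ) : 0 ≤ poch a j :=
  Finset.prod_nonneg fun _ _ => by positivity

lemma poch_le_poch (ha : 0 ≤ a) (hab : a ≤ b) (j : ℕ) : poch a j ≤ poch b j :=
  Finset.prod_le_prod (fun _ _ => by positivity) fun _ _ => by gcongr

lemma abs_poch_le (a : ℝ) (j : ℕ) : |poch a j| ≤ poch |a| j := by
  rw [poch, poch, Finset.abs_prod]
  refine Finset.prod_le_prod (fun _ _ => abs_nonneg _) fun i _ => ?_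
  simpa using abs_add_le a (i : ℝ)

lemma le_poch (ha : 1 ≤ a) (hj : j ≠ 0) : a ≤ poch a j := by
  obtain ⟨k, rfl⟩ := Nat.exists_eq_succ_of_ne_zero hj
  rw [poch_succ']
  refine le_mul_of_one_le_right (by linarith) (Finset.one_le_prod fun i _ => ?_)
  have : (0 : ℝ) ≤ i := i.cast_nonneg
  linarith

lemma tendsto_poch_atTop (hj : j ≠ 0) : Tendsto (poch · j) atTop atTop :=
  tendsto_atTop_mono' _ (eventually_ge_atTop 1 |>.mono fun _ ha => le_poch ha hj) tendsto_id

lemma poch_neg_natCast_eq_zero {m n : ℕ} (h : m < n) : poch (-m) n = 0 :=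
  Finset.prod_eq_zero (Finset.mem_range.mpr h) (by ring)

end Pochhammer

lemma poch_succ_eq_mul_inv_GammaSeq (s : ℝ) {n : ℕ} (hn : n ≠ 0) :
    poch s (n + 1) = (n : ℝ) ^ s * n ! * (GammaSeq s n)⁻¹ := by
  have : (n : ℝ) ^ s * n ! ≠ 0 := by positivity
  rw [GammaSeq, inv_div, mul_div_cancel₀ _ this, poch]

lemma tendsto_inv_GammaSeq (s : ℝ) :
    Tendsto (fun n => (GammaSeq s n)⁻¹) atTop (𝓝 (Gamma s)⁻¹) := by
  by_cases hs : Gamma s = 0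
  · -- At a pole `s = -m`, `GammaSeq s n` is eventually a division by `(s)_{n+1} = 0`, hence `0`.
    obtain ⟨m, rfl⟩ := (Gamma_eq_zero_iff s).mp hs
    rw [hs, inv_zero]
    refine tendsto_const_nhds.congr' (eventually_gt_atTop m |>.mono fun n hn => ?_)
    dsimp only
    rw [GammaSeq, inv_div, ← poch, poch_neg_natCast_eq_zero (by omega), zero_div]
  · exact (GammaSeq_tendsto_Gamma s).inv₀ hs

lemma tendsto_poch_mul_poch_div {x y u v : ℝ} (hxy : x + y = u + v) (hu : Gamma u ≠ 0)
    (hv : Gamma v ≠ 0) :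
    Tendsto (fun n => poch x n * poch y n / (poch u n * poch v n)) atTop
      (𝓝 (Gamma u * Gamma v / (Gamma x * Gamma y))) := by
  rw [← tendsto_add_atTop_iff_nat 1]
  have hlim := ((tendsto_inv_GammaSeq x).mul (tendsto_inv_GammaSeq y)).div
    ((tendsto_inv_GammaSeq u).mul (tendsto_inv_GammaSeq v)) (by simp [hu, hv])
  rw [← mul_inv, ← mul_inv, inv_div_inv] at hlim
  refine hlim.congr' (eventually_ne_atTop 0 |>.mono fun n hn => ?_)
  dsimp only [Pi.div_apply]
  have hpow : (n : ℝ) ^ x * (n : ℝ) ^ y = (n : ℝ) ^ u * (n : ℝ) ^ v := by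
    rw [← rpow_add (by positivity), ← rpow_add (by positivity), hxy]
  have hA : (n : ℝ) ^ u * (n : ℝ) ^ v * n ! * n ! ≠ 0 := by positivity
  simp only [poch_succ_eq_mul_inv_GammaSeq _ hn]
  rw [← mul_div_mul_left _ _ hA]
  congr 1
  · linear_combination (-(n ! * n ! * (GammaSeq x n)⁻¹ * (GammaSeq y n)⁻¹ : ℝ)) * hpow
  · ring

/-- The `j`-th term of the series `₂F₁(a, b; c; 1)`. -/
noncomputable def hypergeomTerm (a b c : ℝ) (j : ℕ) : ℝ := poch a j * poch b j / (poch c j * j !)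

section HypergeomTerm

variable {a b c : ℝ}

@[simp]
lemma hypergeomTerm_zero (a b c : ℝ) : hypergeomTerm a b c 0 = 1 := by
  simp [hypergeomTerm]

lemma hypergeomTerm_succ_eq_rpow_mul {n : ℕ} (hc : 0 < c) (hn : n ≠ 0) :
    hypergeomTerm a b c (n + 1) = (n : ℝ) ^ (a + b - c) / (n + 1) *
      ((GammaSeq a n)⁻¹ * (GammaSeq b n)⁻¹ / (GammaSeq c n)⁻¹) := by
  have hn0 : (0 : ℝ) < n := by positivity
  have hgc : (GammaSeq c n)⁻¹ ≠ 0 := by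
    rw [← mul_ne_zero_iff_left (by positivity : (n : ℝ) ^ c * n ! ≠ 0),
      ← poch_succ_eq_mul_inv_GammaSeq c hn]
    exact (poch_pos hc _).ne'
  rw [hypergeomTerm, poch_succ_eq_mul_inv_GammaSeq a hn, poch_succ_eq_mul_inv_GammaSeq b hn,
    poch_succ_eq_mul_inv_GammaSeq c hn, rpow_sub hn0, rpow_add hn0, Nat.factorial_succ]
  push_cast
  field_simp

lemma tendsto_inv_GammaSeq_ratio (hc : 0 < c) :
    Tendsto (fun n => (GammaSeq a n)⁻¹ * (GammaSeq b n)⁻¹ / (GammaSeq c n)⁻¹) atTop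
      (𝓝 (Gamma c / (Gamma a * Gamma b))) := by
  rw [← inv_div_inv, mul_inv]
  exact ((tendsto_inv_GammaSeq a).mul (tendsto_inv_GammaSeq b)).div (tendsto_inv_GammaSeq c)
    (inv_ne_zero (Gamma_pos_of_pos hc).ne')

lemma isBigO_hypergeomTerm_succ (hc : 0 < c) :
    (fun n => hypergeomTerm a b c (n + 1)) =O[atTop] fun n : ℕ => (n : ℝ) ^ (a + b - c - 1) := by
  have hpow : (fun n : ℕ => (n : ℝ) ^ (a + b - c) / (n + 1)) =O[atTop]
      fun n : ℕ => (n : ℝ) ^ (a + b - c - 1) := by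
    refine IsBigO.of_bound 1 (eventually_ne_atTop 0 |>.mono fun n hn => ?_)
    have hn0 : (0 : ℝ) < n := by positivity
    rw [one_mul, norm_of_nonneg (by positivity), norm_of_nonneg (by positivity),
      rpow_sub_one hn0.ne']
    gcongr
    linarith
  simpa using (hpow.mul ((tendsto_inv_GammaSeq_ratio hc).isBigO_one ℝ)).congr'
    (eventually_ne_atTop 0 |>.mono fun n hn => (hypergeomTerm_succ_eq_rpow_mul hc hn).symm) .rfl

lemma summable_hypergeomTerm (hc : 0 < c) (habc : 0 < c - a - b) :
    Summable (hypergeomTerm a b c) :=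
  (summable_nat_add_iff 1).mp <| summable_of_isBigO_nat'
    (summable_nat_rpow.mpr (by linarith)) (isBigO_hypergeomTerm_succ hc)

lemma tendsto_natCast_mul_hypergeomTerm (hc : 0 < c) (habc : 0 < c - a - b) :
    Tendsto (fun n : ℕ => n * hypergeomTerm a b c n) atTop (𝓝 0) := by
  rw [← tendsto_add_atTop_iff_nat 1]
  have hpow : Tendsto (fun n : ℕ => (n : ℝ) ^ (a + b - c)) atTop (𝓝 0) := by
    rw [show a + b - c = -(c - a - b) by ring]
    exact (tendsto_rpow_neg_atTop habc).comp tendsto_natCast_atTop_atTop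
  have hlim := hpow.mul (tendsto_inv_GammaSeq_ratio (a := a) (b := b) hc)
  rw [zero_mul] at hlim
  refine hlim.congr' (eventually_ne_atTop 0 |>.mono fun n hn => ?_)
  dsimp only
  rw [hypergeomTerm_succ_eq_rpow_mul hc hn]
  push_cast
  field_simp

lemma hypergeomTerm_succ (hc : 0 < c) (j : ℕ) :
    hypergeomTerm a b c (j + 1) =
      hypergeomTerm a b c j * ((a + j) * (b + j)) / ((c + j) * (j + 1)) := by
  have := (poch_pos hc j).ne'
  have : c + j ≠ 0 := by positivity
  simp only [hypergeomTerm, poch_succ, Nat.factorial_succ]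
  push_cast
  field_simp

lemma hypergeomTerm_add_one_right (hc : 0 < c) (j : ℕ) :
    hypergeomTerm a b (c + 1) j = c * hypergeomTerm a b c j / (c + j) := by
  have hpoch : poch (c + 1) j = poch c j * (c + j) / c := by
    rw [← poch_succ, poch_succ', mul_div_cancel_left₀ _ hc.ne']
  have := (poch_pos hc j).ne'
  have : c + j ≠ 0 := by positivity
  simp only [hypergeomTerm, hpoch]
  field_simp

/-- Termwise form of Gauss's contiguous relation between `₂F₁(a, b; c; 1)` and
`₂F₁(a, b; c + 1; 1)`: the difference of the two series telescopes. -/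
lemma hypergeomTerm_contiguous (hc : 0 < c) (j : ℕ) :
    c * (c - a - b) * hypergeomTerm a b c j - (c - a) * (c - b) * hypergeomTerm a b (c + 1) j =
      c * (j * hypergeomTerm a b c j - (j + 1 : ℕ) * hypergeomTerm a b c (j + 1)) := by
  have : c + j ≠ 0 := by positivity
  rw [hypergeomTerm_succ hc, hypergeomTerm_add_one_right hc]
  push_cast
  field_simp
  ring

lemma tsum_hypergeomTerm_eq_mul_tsum_add_one (hc : 0 < c) (habc : 0 < c - a - b) :
    ∑' j, hypergeomTerm a b c j =
      (c - a) * (c - b) / (c * (c - a - b)) * ∑' j, hypergeomTerm a b (c + 1) j := by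
  set G : ℕ → ℝ := fun j => j * hypergeomTerm a b c j
  have hS₁ := (summable_hypergeomTerm hc habc).mul_left (c * (c - a - b))
  have hS₂ := (summable_hypergeomTerm (a := a) (b := b) (c := c + 1) (by linarith)
    (by linarith)).mul_left ((c - a) * (c - b))
  have hpartial : Tendsto (fun n => ∑ j ∈ Finset.range n, c * (G j - G (j + 1))) atTop (𝓝 0) := by
    simp only [← Finset.mul_sum, Finset.sum_range_sub', G, Nat.cast_zero, zero_mul, zero_sub]
    simpa using (tendsto_natCast_mul_hypergeomTerm hc habc).neg.const_mul c
  have htsum : ∑' j, (c * (c - a - b) * hypergeomTerm a b c j -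
      (c - a) * (c - b) * hypergeomTerm a b (c + 1) j) = 0 := by
    have hsummable := hS₁.sub hS₂
    simp only [hypergeomTerm_contiguous hc] at hsummable ⊢
    exact (hsummable.hasSum_iff_tendsto_nat.mpr hpartial).tsum_eq
  rw [hS₁.tsum_sub hS₂, tsum_mul_left, tsum_mul_left] at htsum
  have : c * (c - a - b) ≠ 0 := by positivity
  field_simp
  linarith

end HypergeomTerm

lemma tsum_hypergeomTerm_eq_poch_mul_tsum_add {a b c : ℝ} (hc : 0 < c) (habc : 0 < c - a - b)
    (n : ℕ) :
    ∑' j, hypergeomTerm a b c j =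
      poch (c - a) n * poch (c - b) n / (poch c n * poch (c - a - b) n) *
        ∑' j, hypergeomTerm a b (c + n) j := by
  induction n with
  | zero => simp
  | succ n ih =>
    have hcn : 0 < c + n := by positivity
    have hcabn : 0 < c + n - a - b := by linarith [n.cast_nonneg (α := ℝ)]
    have := (poch_pos hc n).ne'
    have := (poch_pos habc n).ne'
    rw [ih, tsum_hypergeomTerm_eq_mul_tsum_add_one hcn hcabn, add_assoc, ← Nat.cast_add_one]
    simp only [poch_succ]
    field_simp
    ring

section Tannery

variable {a b : ℝ}

lemma abs_hypergeomTerm_le {x y : ℝ} (hx : 0 < x) (hxy : x ≤ y) (j : ℕ) :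
    |hypergeomTerm a b y j| ≤ hypergeomTerm |a| |b| x j := by
  have hden : 0 < poch y j * j ! := mul_pos (poch_pos (hx.trans_le hxy) j) (by positivity)
  rw [hypergeomTerm, hypergeomTerm, abs_div, abs_of_pos hden, abs_mul]
  refine div_le_div₀ (mul_nonneg (poch_nonneg (abs_nonneg a) j) (poch_nonneg (abs_nonneg b) j))
    (mul_le_mul (abs_poch_le a j) (abs_poch_le b j) (abs_nonneg _) (poch_nonneg (abs_nonneg a) j))
    (mul_pos (poch_pos hx j) (by positivity)) ?_
  gcongr
  exact poch_le_poch hx.le hxy j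

lemma tendsto_hypergeomTerm_add_atTop (a b c : ℝ) (j : ℕ) :
    Tendsto (fun n : ℕ => hypergeomTerm a b (c + n) j) atTop (𝓝 (if j = 0 then 1 else 0)) := by
  split_ifs with hj
  · simp [hj]
  have hpoch : Tendsto (fun n : ℕ => (poch (c + n) j)⁻¹) atTop (𝓝 0) :=
    ((tendsto_poch_atTop hj).comp
      (tendsto_atTop_add_const_left _ c tendsto_natCast_atTop_atTop)).inv_tendsto_atTop
  simpa [hypergeomTerm, div_eq_mul_inv, mul_comm, mul_left_comm] using
    hpoch.const_mul (poch a j * poch b j * (j ! : ℝ)⁻¹)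

lemma tendsto_tsum_hypergeomTerm_add_atTop (a b c : ℝ) :
    Tendsto (fun n : ℕ => ∑' j, hypergeomTerm a b (c + n) j) atTop (𝓝 1) := by
  set x := |a| + |b| + 1
  have hx : 0 < x := by positivity
  have hcn : Tendsto (fun n : ℕ => c + n) atTop atTop :=
    tendsto_atTop_add_const_left _ c tendsto_natCast_atTop_atTop
  have hbound : ∀ᶠ n : ℕ in atTop, ∀ j,
      ‖hypergeomTerm a b (c + n) j‖ ≤ hypergeomTerm |a| |b| x j := by
    filter_upwards [hcn.eventually_ge_atTop x] with n hn j
    exact abs_hypergeomTerm_le hx hn j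
  simpa using tendsto_tsum_of_dominated_convergence
    (summable_hypergeomTerm hx (by simp only [x]; linarith))
    (tendsto_hypergeomTerm_add_atTop a b c) hbound

end Tannery

theorem stmt_13_general (a b c : ℝ) (hc : 0 < c) (hcab : 0 < c - a - b) :
    Summable (fun j : ℕ => poch a j * poch b j / (poch c j * (Nat.factorial j))) ∧
    ∑' j : ℕ, poch a j * poch b j / (poch c j * (Nat.factorial j)) =
      Real.Gamma c * Real.Gamma (c - a - b) /
        (Real.Gamma (c - a) * Real.Gamma (c - b)) := by
  refine ⟨summable_hypergeomTerm hc hcab, ?_⟩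
  have hlim := (tendsto_poch_mul_poch_div (x := c - a) (y := c - b) (by ring)
    (Gamma_pos_of_pos hc).ne' (Gamma_pos_of_pos hcab).ne').mul
    (tendsto_tsum_hypergeomTerm_add_atTop a b c)
  rw [mul_one] at hlim
  exact tendsto_nhds_unique
    (tendsto_const_nhds.congr (tsum_hypergeomTerm_eq_poch_mul_tsum_add hc hcab)) hlim

theorem stmt_13 (a b c : ℝ) (hc : 0 < c) (hcab : 0 < c - a - b)
    (hca : 0 < c - a) (hcb : 0 < c - b) :
    Summable (fun j : ℕ => poch a j * poch b j / (poch c j * (Nat.factorial j))) ∧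
    ∑' j : ℕ, poch a j * poch b j / (poch c j * (Nat.factorial j)) =
      Real.Gamma c * Real.Gamma (c - a - b) /
        (Real.Gamma (c - a) * Real.Gamma (c - b)) :=
  stmt_13_general a b c hc hcab
end
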